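/- Let n ∈ ℕ with n ≥ 5, and let v* be the largest natural number v such that v·2^v < 2^{n-3} (equivalently, v* = ⌈W₀(2^{n-3}·ln 2)/ln 2 − 1⌉, where W₀ is the principal branch of the Lambert W function). Then for every integer m with |m| ≤ 2^{v*} and |m| ≤ 2^{254}, there exists a bit string M of length n with τ(M) = m; that is, every such integer is representable as an n-bit takum. -/

import Mathlib

/-- Integer value of a bit string read MSB → LSB. -/
def bitsToNat (L : List Bool) : ℕ :=
  L.foldl (fun a b => 2 * a + (if b then 1 else 0)) 0

/-- The (linear) takum decoding function `τ`. A bit string (MSB → LSB, padded on the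
right with zero "ghost bits" as needed) consists of a sign bit `S`, a direction bit `D`,
three regime bits `R` with regime `r = int(R)` if `D = 1` and `r = 7 - int(R)` if
`D = 0`, `r` characteristic bits `C` with characteristic `c = 2^r - 1 + int(C)` if
`D = 1` and `c = -2^(r+1) + 1 + int(C)` if `D = 0`, and fraction bits `F` with fraction
`f = int(F)/2^p ∈ [0,1)`. The all-zeros string encodes `0` (`some 0`), `10…0` encodes
NaR (`none`), and every other string encodes `((1 - 3S) + f) · 2^e` with exponent
`e = (-1)^S (c + S)`. -/
def takumVal : List Bool → Option ℚ
  | [] => some 0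
  | S :: rest =>
    if rest.all (fun b => b == false) then
      if S then none else some 0
    else
      let D : Bool := rest.getD 0 false
      let rawR : ℕ := bitsToNat [rest.getD 1 false, rest.getD 2 false, rest.getD 3 false]
      let r : ℕ := if D then rawR else 7 - rawR
      let C : List Bool := (rest.drop 4).take r
      let Cpad : List Bool := C ++ List.replicate (r - C.length) false
      let c : ℤ := if D then 2 ^ r - 1 + (bitsToNat Cpad : ℤ)
                   else -(2 ^ (r + 1)) + 1 + (bitsToNat Cpad : ℤ)
      let F : List Bool := rest.drop (4 + r)
      let f : ℚ := (bitsToNat F : ℚ) / 2 ^ F.length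
      let s : ℤ := if S then 1 else 0
      let e : ℤ := (if S then -1 else 1) * (c + s)
      some (((1 - 3 * (s : ℚ)) + f) * 2 ^ e)

/-!
A positive integer `a` with `2^e ≤ a < 2^(e+1)` is the takum value `(1 + f)·2^e`, and `-a` is
`(f - 2)·2^(k-1)` with `k = ⌈log₂ a⌉`. The fraction `f` needs at most `e` (resp. `k - 1`) bits,
and the characteristic `e` (resp. `-k`) needs a regime `r` with `2^r ≤ e + 1`
(resp. `2^r ≤ max k 1`), so `r < 8` once `a ≤ 2^254`. Whenever `2^r ≤ v`, the choice of `v` gives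
`2^(r+v) ≤ v·2^v < 2^(n-3)`, i.e. `r + v + 4 ≤ n`, which leaves room for all fraction bits as long
as the exponent is below `v`. The remaining case `a = 2^e` needs no fraction bits, and there the
characteristic fits as well, except for `a = 2`, `n = 5`, where its single characteristic bit is a
zero ghost bit.
-/

def natBits : ℕ → ℕ → List Bool
  | 0, _ => []
  | k + 1, x => natBits k (x / 2) ++ [decide (x % 2 = 1)]

@[simp]
lemma length_natBits (k x : ℕ) : (natBits k x).length = k := by
  induction k generalizing x with
  | zero => rfl
  | succ k ih => simp [natBits, ih]

lemma foldl_bitsToNat (L : List Bool) (a : ℕ) :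
    L.foldl (fun a b => 2 * a + (if b then 1 else 0)) a = a * 2 ^ L.length + bitsToNat L := by
  induction L generalizing a with
  | nil => simp [bitsToNat]
  | cons b L ih =>
    have hb : bitsToNat (b :: L) = (if b then 1 else 0) * 2 ^ L.length + bitsToNat L := by
      rw [bitsToNat, List.foldl_cons, ih]
      simp
    rw [List.foldl_cons, ih, hb, List.length_cons, pow_succ]
    ring

lemma bitsToNat_append (L M : List Bool) :
    bitsToNat (L ++ M) = bitsToNat L * 2 ^ M.length + bitsToNat M := by
  rw [bitsToNat, List.foldl_append, foldl_bitsToNat]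
  rfl

lemma bitsToNat_natBits {k x : ℕ} (h : x < 2 ^ k) : bitsToNat (natBits k x) = x := by
  induction k generalizing x with
  | zero => simp_all [natBits, bitsToNat]
  | succ k ih =>
    rw [natBits, bitsToNat_append, ih (by omega)]
    rcases Nat.mod_two_eq_zero_or_one x with hx | hx <;> simp [bitsToNat, hx] <;> omega

lemma bitsToNat_eq_zero {L : List Bool} (h : ∀ b ∈ L, b = false) : bitsToNat L = 0 := by
  induction L using List.reverseRecOn with
  | nil => rfl
  | append_singleton L b ih =>
    rw [bitsToNat_append, ih fun x hx => h x (by simp [hx]), h b (by simp)]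
    rfl

lemma eq_zero_of_natBits_eq_false {k x : ℕ} (h : x < 2 ^ k) (hx : ∀ b ∈ natBits k x, b = false) :
    x = 0 := by
  rw [← bitsToNat_natBits h, bitsToNat_eq_zero hx]

def characteristic (D : Bool) (r cv : ℕ) : ℤ :=
  if D then 2 ^ r - 1 + cv else -2 ^ (r + 1) + 1 + cv

def takumBits (S D : Bool) (r cv p fv : ℕ) : List Bool :=
  S :: D :: (natBits 3 (if D then r else 7 - r) ++ natBits r cv ++ natBits p fv)

@[simp]
lemma length_takumBits (S D : Bool) (r cv p fv : ℕ) :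
    (takumBits S D r cv p fv).length = r + p + 5 := by
  simp [takumBits]
  omega

lemma takumVal_takumBits (S D : Bool) {r cv p fv : ℕ} (hr : r < 8) (hcv : cv < 2 ^ r)
    (hfv : fv < 2 ^ p) (hc : -255 < characteristic D r cv) :
    takumVal (takumBits S D r cv p fv) =
      some ((1 - 3 * (if S then 1 else 0) + (fv : ℚ) / 2 ^ p) *
        2 ^ ((if S then -1 else 1) * (characteristic D r cv + if S then 1 else 0))) := by
  set rawR := if D then r else 7 - r with hrawR
  have hR : rawR < 2 ^ 3 := by grind
  obtain ⟨b₁, b₂, b₃, hbits⟩ := List.length_eq_three.mp (length_natBits 3 rawR)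
  have hRval : bitsToNat [b₁, b₂, b₃] = rawR := hbits ▸ bitsToNat_natBits hR
  have hr' : (if D then rawR else 7 - rawR) = r := by grind
  set C := natBits r cv
  set F := natBits p fv
  have hC : C.length = r := length_natBits r cv
  -- `hc` excludes an all-zero tail after the sign bit, which would encode `0` or NaR
  have hnz : ¬ (D :: (b₁ :: b₂ :: b₃ :: (C ++ F))).all (· == false) := by
    simp only [List.all_eq_true, beq_iff_eq]
    intro hall
    have hD : D = false := hall D (by simp)
    have hR0 : rawR = 0 := by
      rw [← hRval, hall b₁ (by simp), hall b₂ (by simp), hall b₃ (by simp)]; rfl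
    have hcv0 : cv = 0 := eq_zero_of_natBits_eq_false hcv fun b hb => hall b (by simp [C, hb])
    simp only [characteristic, hD, hcv0] at hc
    grind
  have hlist : takumBits S D r cv p fv = S :: D :: b₁ :: b₂ :: b₃ :: (C ++ F) := by
    simp [takumBits, ← hrawR, hbits, C, F]
  rw [hlist, takumVal, if_neg hnz]
  have hdrop : (D :: b₁ :: b₂ :: b₃ :: (C ++ F)).drop (4 + r) = F := by
    rw [← List.drop_drop]
    exact List.drop_left' hC
  have hCval : bitsToNat C = cv := bitsToNat_natBits hcv
  have hFval : bitsToNat F = fv := bitsToNat_natBits hfv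
  simp [hRval, hr', List.take_left' hC, hdrop, hC, hCval, hFval, F, characteristic]

lemma exists_characteristic_eq {c : ℤ} (hlo : -255 < c) (hhi : c ≤ 254) :
    ∃ D r cv, r < 8 ∧ cv < 2 ^ r ∧ characteristic D r cv = c ∧ (2 : ℤ) ^ r ≤ max (c + 1) (-c) := by
  rcases le_or_gt 0 c with hc | hc
  · lift c to ℕ using hc
    set r := Nat.log 2 (c + 1)
    have hr₁ : 2 ^ r ≤ c + 1 := Nat.pow_log_le_self 2 (by omega)
    have hr₂ : c + 1 < 2 ^ (r + 1) := Nat.lt_pow_succ_log_self (by norm_num) _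
    have hr₈ : r < 8 := Nat.log_lt_of_lt_pow (by omega) (by omega)
    refine ⟨true, r, c + 1 - 2 ^ r, hr₈, by omega, ?_, ?_⟩
    · simp [characteristic, Nat.cast_sub hr₁]
    · exact le_max_of_le_left (by exact_mod_cast hr₁)
  · obtain ⟨k, rfl⟩ : ∃ k : ℕ, c = -k := ⟨(-c).toNat, by omega⟩
    set r := Nat.log 2 k
    have hr₁ : 2 ^ r ≤ k := Nat.pow_log_le_self 2 (by omega)
    have hr₂ : k < 2 ^ (r + 1) := Nat.lt_pow_succ_log_self (by norm_num) _
    have hr₈ : r < 8 := Nat.log_lt_of_lt_pow (by omega) (by omega)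
    refine ⟨false, r, 2 ^ (r + 1) - 1 - k, hr₈, by omega, ?_, ?_⟩
    · simp [characteristic, Nat.cast_sub (show k ≤ 2 ^ (r + 1) - 1 by omega),
        Nat.cast_sub (show 1 ≤ 2 ^ (r + 1) by omega)]
      ring
    · exact le_max_of_le_right (by rw [neg_neg]; exact_mod_cast hr₁)

def TakumRepresentable (n : ℕ) (x : ℚ) : Prop :=
  ∃ M : List Bool, M.length = n ∧ takumVal M = some x

lemma takumRepresentable_zero {n : ℕ} (hn : 0 < n) : TakumRepresentable n 0 := by
  obtain ⟨k, rfl⟩ := Nat.exists_eq_add_of_lt hn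
  exact ⟨List.replicate (k + 1) false, by simp, by rw [List.replicate_succ]; simp [takumVal]⟩

lemma exists_fraction_natCast {a e p : ℕ} (hea : 2 ^ e ≤ a) (hae : a < 2 ^ (e + 1)) (hp : e ≤ p) :
    ∃ fv : ℕ, fv < 2 ^ p ∧ (1 + (fv : ℚ) / 2 ^ p) * 2 ^ e = a := by
  have hp' : 2 ^ p = 2 ^ (p - e) * 2 ^ e := by rw [← pow_add, Nat.sub_add_cancel hp]
  refine ⟨(a - 2 ^ e) * 2 ^ (p - e), ?_, ?_⟩
  · rw [hp', mul_comm (2 ^ (p - e))]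
    exact Nat.mul_lt_mul_of_pos_right (by omega) (by positivity)
  · have hp'' : (2 : ℚ) ^ p = 2 ^ (p - e) * 2 ^ e := by exact_mod_cast hp'
    push_cast [Nat.cast_sub hea]
    field_simp
    linear_combination (2 ^ e - (a : ℚ)) * hp''

lemma exists_fraction_neg_natCast {a k p : ℕ} (hka : 2 ^ k < 2 * a) (hak : a ≤ 2 ^ k)
    (hp : k ≤ p + 1) :
    ∃ fv : ℕ, fv < 2 ^ p ∧ (-2 + (fv : ℚ) / 2 ^ p) * 2 ^ ((k : ℤ) - 1) = -a := by
  have hp' : 2 ^ (p + 1) = 2 ^ (p + 1 - k) * 2 ^ k := by rw [← pow_add, Nat.sub_add_cancel hp]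
  refine ⟨(2 ^ k - a) * 2 ^ (p + 1 - k), ?_, ?_⟩
  · have : (2 ^ k - a) * 2 ^ (p + 1 - k) * 2 < 2 ^ (p + 1) := by
      rw [hp', mul_right_comm, mul_comm (2 ^ (p + 1 - k))]
      exact Nat.mul_lt_mul_of_pos_right (by omega) (by positivity)
    rw [pow_succ] at this
    omega
  · have hp'' : (2 : ℚ) ^ p * 2 = 2 ^ (p + 1 - k) * 2 ^ k := by exact_mod_cast pow_succ 2 p ▸ hp'
    rw [zpow_sub₀ two_ne_zero, zpow_natCast, zpow_one]
    push_cast [Nat.cast_sub hak]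
    field_simp
    linear_combination ((a : ℚ) - 2 ^ k) * hp''

lemma exists_regime_takumRepresentable_natCast {a e : ℕ} (hea : 2 ^ e ≤ a) (hae : a < 2 ^ (e + 1))
    (he : e ≤ 254) :
    ∃ r, 2 ^ r ≤ e + 1 ∧ ∀ p, (e ≤ p ∨ a = 2 ^ e) → TakumRepresentable (r + p + 5) a := by
  obtain ⟨D, r, cv, hr, hcv, hc, hbound⟩ := exists_characteristic_eq (c := e) (by omega) (by omega)
  refine ⟨r, ?_, fun p hp => ?_⟩
  · rw [max_eq_left (by omega)] at hbound
    exact_mod_cast hbound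
  obtain ⟨fv, hfv, hval⟩ : ∃ fv : ℕ, fv < 2 ^ p ∧ (1 + (fv : ℚ) / 2 ^ p) * 2 ^ e = a := by
    rcases hp with hp | rfl
    · exact exists_fraction_natCast hea hae hp
    · exact ⟨0, by positivity, by simp⟩
  refine ⟨takumBits false D r cv p fv, by simp, ?_⟩
  rw [takumVal_takumBits false D hr hcv hfv (by omega), hc]
  simpa using hval

lemma exists_regime_takumRepresentable_neg_natCast {a k : ℕ} (hka : 2 ^ k < 2 * a) (hak : a ≤ 2 ^ k)
    (hk : k ≤ 254) :
    ∃ r, 2 ^ r ≤ max k 1 ∧ ∀ p, k ≤ p + 1 → TakumRepresentable (r + p + 5) (-a) := by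
  obtain ⟨D, r, cv, hr, hcv, hc, hbound⟩ := exists_characteristic_eq (c := -k) (by omega) (by omega)
  refine ⟨r, ?_, fun p hp => ?_⟩
  · have : (2 : ℤ) ^ r ≤ max k 1 := hbound.trans (by
      rw [neg_neg, max_comm]; push_cast; exact max_le_max le_rfl (by omega))
    exact_mod_cast this
  obtain ⟨fv, hfv, hval⟩ := exists_fraction_neg_natCast hka hak hp
  refine ⟨takumBits true D r cv p fv, by simp, ?_⟩
  rw [takumVal_takumBits true D hr hcv hfv (by omega), hc]
  convert congrArg some hval using 4 <;> simp only [if_true] <;> ring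

lemma add_add_four_le_of_two_pow_le {n v r : ℕ} (hv : v * 2 ^ v < 2 ^ (n - 3)) (hr : 2 ^ r ≤ v) :
    r + v + 4 ≤ n := by
  have : 2 ^ (r + v) < 2 ^ (n - 3) := by
    rw [pow_add]
    exact (Nat.mul_le_mul_right _ hr).trans_lt hv
  have := (Nat.pow_lt_pow_iff_right (by norm_num)).mp this
  omega

lemma add_five_le_or_of_two_pow_le_succ {n v e r : ℕ} (hn : 5 ≤ n) (hv : v * 2 ^ v < 2 ^ (n - 3))
    (he : e ≤ v) (hr : 2 ^ r ≤ e + 1) : r + 5 ≤ n ∨ n = 5 ∧ e = 1 := by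
  obtain rfl | ⟨s, rfl⟩ : r = 0 ∨ ∃ s, r = s + 1 := by cases r <;> simp
  · exact Or.inl hn
  rw [pow_succ] at hr
  rcases le_or_gt 2 v with hv2 | hv2
  · have := add_add_four_le_of_two_pow_le hv (show 2 ^ s ≤ v by omega)
    omega
  · have hs : s = 0 := by
      by_contra hs
      have := Nat.one_lt_two_pow_iff.mpr hs
      omega
    subst hs
    omega

lemma two_pow_clog_lt_two_mul {a : ℕ} (ha : 0 < a) : 2 ^ Nat.clog 2 a < 2 * a := by
  rcases (show 1 ≤ a from ha).eq_or_lt with rfl | ha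
  · simp
  have hk : Nat.clog 2 a = (Nat.clog 2 a).pred + 1 :=
    (Nat.succ_pred_eq_of_pos (Nat.clog_pos (by norm_num) ha)).symm
  have := Nat.pow_pred_clog_lt_self (b := 2) (by norm_num) ha
  rw [hk, pow_succ]
  omega

lemma takumRepresentable_natCast {n v a : ℕ} (hn : 5 ≤ n) (hv : v * 2 ^ v < 2 ^ (n - 3))
    (ha : 0 < a) (hav : a ≤ 2 ^ v) (ha' : a ≤ 2 ^ 254) : TakumRepresentable n a := by
  set e := Nat.log 2 a
  have hea : 2 ^ e ≤ a := Nat.pow_log_le_self 2 ha.ne'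
  have hae : a < 2 ^ (e + 1) := Nat.lt_pow_succ_log_self (by norm_num) a
  have he : e ≤ v := (Nat.pow_le_pow_iff_right (by norm_num)).mp (hea.trans hav)
  have he' : e ≤ 254 := (Nat.pow_le_pow_iff_right (by norm_num)).mp (hea.trans ha')
  obtain ⟨r, hr, hrep⟩ := exists_regime_takumRepresentable_natCast hea hae he'
  by_cases hpow : a = 2 ^ e
  · rcases add_five_le_or_of_two_pow_le_succ hn hv he hr with hlen | ⟨rfl, he1⟩
    · obtain ⟨p, rfl⟩ : ∃ p, n = r + p + 5 := ⟨n - r - 5, by omega⟩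
      exact hrep p (Or.inr hpow)
    · -- the characteristic bit of `2` is a ghost bit
      rw [hpow, he1]
      exact ⟨[false, true, false, false, true], rfl, by norm_num [takumVal, bitsToNat]⟩
  · have hev : e < v :=
      (Nat.pow_lt_pow_iff_right (by norm_num)).mp ((by omega : 2 ^ e < a).trans_le hav)
    have := add_add_four_le_of_two_pow_le hv (show 2 ^ r ≤ v by omega)
    obtain ⟨p, rfl⟩ : ∃ p, n = r + p + 5 := ⟨n - r - 5, by omega⟩
    exact hrep p (Or.inl (by omega))

lemma takumRepresentable_neg_natCast {n v a : ℕ} (hn : 5 ≤ n) (hv : v * 2 ^ v < 2 ^ (n - 3))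
    (ha : 0 < a) (hav : a ≤ 2 ^ v) (ha' : a ≤ 2 ^ 254) : TakumRepresentable n (-a) := by
  set k := Nat.clog 2 a
  have hkv : k ≤ v := Nat.clog_le_of_le_pow hav
  obtain ⟨r, hr, hrep⟩ := exists_regime_takumRepresentable_neg_natCast
    (two_pow_clog_lt_two_mul ha) (Nat.le_pow_clog (by norm_num) a) (Nat.clog_le_of_le_pow ha')
  have hlen : r + 5 ≤ n ∧ k ≤ n - r - 4 := by
    rcases Nat.eq_zero_or_pos k with hk | hk
    · have hr0 : r = 0 := by
        by_contra hr0
        have := Nat.one_lt_two_pow_iff.mpr hr0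
        omega
      omega
    · have := add_add_four_le_of_two_pow_le hv (show 2 ^ r ≤ v by omega)
      omega
  obtain ⟨p, rfl⟩ : ∃ p, n = r + p + 5 := ⟨n - r - 5, by omega⟩
  exact hrep p (by omega)

theorem takum_consecutive_integers_general (n : ℕ) (hn : 5 ≤ n) (v : ℕ)
    (hv : v * 2 ^ v < 2 ^ (n - 3))
    (m : ℤ) (hm : |m| ≤ 2 ^ v) (hbound : |m| ≤ 2 ^ 254) :
    ∃ M : List Bool, M.length = n ∧ takumVal M = some (m : ℚ) := by
  rcases eq_or_ne m 0 with rfl | hm0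
  · exact_mod_cast takumRepresentable_zero (by omega : 0 < n)
  obtain ⟨a, ha, hma⟩ : ∃ a : ℕ, 0 < a ∧ (m = a ∨ m = -a) := ⟨m.natAbs, by omega, by omega⟩
  have hma' : |m| = a := by rcases hma with rfl | rfl <;> simp
  have hav : a ≤ 2 ^ v := by zify; rwa [← hma']
  have ha' : a ≤ 2 ^ 254 := by zify; rwa [← hma']
  rcases hma with rfl | rfl
  · exact_mod_cast takumRepresentable_natCast hn hv ha hav ha'
  · exact_mod_cast takumRepresentable_neg_natCast hn hv ha hav ha'

/-- **Consecutive takum integers (representability).**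
For `n ≥ 5`, let `v` be the largest natural number with `v·2^v < 2^(n-3)`
(equivalently `v = ⌈W₀(2^(n-3)·ln 2)/ln 2 − 1⌉`). Then every integer `m` with
`|m| ≤ 2^v` and `|m| ≤ 2^254` is representable as an `n`-bit takum. -/
theorem takum_consecutive_integers (n : ℕ) (hn : 5 ≤ n) (v : ℕ)
    (hv : v * 2 ^ v < 2 ^ (n - 3))
    (hmax : ∀ u : ℕ, u * 2 ^ u < 2 ^ (n - 3) → u ≤ v)
    (m : ℤ) (hm : |m| ≤ 2 ^ v) (hbound : |m| ≤ 2 ^ 254) :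
    ∃ M : List Bool, M.length = n ∧ takumVal M = some (m : ℚ) :=
  takum_consecutive_integers_general n hn v hv m hm hbound
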